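/- arXiv:2506.09961 — 8 statements merged into one kernel-verified Lean document; each statement's English description precedes it below -/
import Mathlib

section
/- Let V be a finite type, s, t ∈ V with s ≠ t, y : V → ℝ with y s = 1 and y t = 1, and f, g : V → V → ℝ with 0 ≤ f a b and 0 ≤ g a b for all a, b ∈ V. Suppose: (i) for every v ≠ s, ∑_{w} f v w − ∑_{w} f w v = y v and ∑_{w} f w s = (∑_{v} y v) − 1; (ii) for every v ≠ t, ∑_{w} g w v − ∑_{w} g v w = y v and ∑_{w} g t w = (∑_{v} y v) − 1; (iii) for every ordered pair (a,b), f a b = 0 if and only if g a b = 0. Then for every w ∈ V one has f s w = 0, g s w = 0, f w t = 0, and g w t = 0; that is, there are no outgoing flows of either commodity from the entrance and no incoming flows of either commodity to the exit. -/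
/-!
Summing the conservation constraints of `f` over all cells, every arc cancels, so the net
outflow at `s` is minus the total supply `∑_{v ≠ s} y v`; since this supply is exactly what enters
`s`, nothing leaves `s`. Reversing the arcs of `g` turns it into a flow of the same shape with
sink `t`, so nothing enters `t`. Nonnegativity makes every single arc flow vanish, and the
coupling (iii) transfers the conclusion from each commodity to the other.
-/

open Finset

section FlowConservation

variable {V R : Type*} [Fintype V]

theorem sum_netOutflow_eq_zero [AddCommGroup R] (f : V → V → R) :
    ∑ v, (∑ w, f v w - ∑ w, f w v) = 0 := by
  rw [sum_sub_distrib, sum_comm, sub_self]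

theorem sum_outflow_eq_zero_of_inflow_eq_supply [AddCommGroup R] [DecidableEq V]
    (f : V → V → R) (y : V → R) (s : V)
    (hcons : ∀ v, v ≠ s → ∑ w, f v w - ∑ w, f w v = y v)
    (hsink : ∑ w, f w s = ∑ v ∈ univ.erase s, y v) :
    ∑ w, f s w = 0 := by
  have hsplit := add_sum_erase univ (fun v => ∑ w, f v w - ∑ w, f w v) (mem_univ s)
  rw [sum_netOutflow_eq_zero,
    sum_congr rfl fun v hv => hcons v (ne_of_mem_erase hv), ← hsink] at hsplit
  simpa using hsplit

theorem outflow_eq_zero_of_inflow_eq_supply [AddCommGroup R] [PartialOrder R]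
    [IsOrderedAddMonoid R] [DecidableEq V]
    (f : V → V → R) (y : V → R) (s : V) (hf : ∀ a b, 0 ≤ f a b)
    (hcons : ∀ v, v ≠ s → ∑ w, f v w - ∑ w, f w v = y v)
    (hsink : ∑ w, f w s = ∑ v ∈ univ.erase s, y v) (w : V) :
    f s w = 0 :=
  congrFun ((Fintype.sum_eq_zero_iff_of_nonneg (hf s)).1
    (sum_outflow_eq_zero_of_inflow_eq_supply f y s hcons hsink)) w

end FlowConservation

theorem no_outflow_entrance_no_inflow_exit_general {V : Type*} [Fintype V] (s t : V)
    (y : V → ℝ) (f g : V → V → ℝ)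
    (hys : y s = 1) (hyt : y t = 1)
    (hf : ∀ a b : V, 0 ≤ f a b) (hg : ∀ a b : V, 0 ≤ g a b)
    (hfcons : ∀ v : V, v ≠ s → (∑ w, f v w) - (∑ w, f w v) = y v)
    (hfsink : (∑ w, f w s) = (∑ v, y v) - 1)
    (hgcons : ∀ v : V, v ≠ t → (∑ w, g w v) - (∑ w, g v w) = y v)
    (hgsource : (∑ w, g t w) = (∑ v, y v) - 1)
    (hfg : ∀ a b : V, f a b = 0 ↔ g a b = 0) :
    ∀ w : V, f s w = 0 ∧ g s w = 0 ∧ f w t = 0 ∧ g w t = 0 := by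
  classical
  have hsupply : ∀ u, y u = 1 → ∑ v ∈ univ.erase u, y v = ∑ v, y v - 1 := fun u hu => by
    rw [sum_erase_eq_sub (mem_univ u), hu]
  have hf_out : ∀ w, f s w = 0 :=
    outflow_eq_zero_of_inflow_eq_supply f y s hf hfcons (hfsink.trans (hsupply s hys).symm)
  have hg_in : ∀ w, g w t = 0 :=
    outflow_eq_zero_of_inflow_eq_supply (fun a b => g b a) y t (fun a b => hg b a) hgcons
      (hgsource.trans (hsupply t hyt).symm)
  exact fun w => ⟨hf_out w, (hfg s w).1 (hf_out w), (hfg w t).2 (hg_in w), hg_in w⟩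

/-- In the one-way parking lot MIP, there are no outgoing flows of either
commodity from the entrance `s` and no incoming flows of either commodity to
the exit `t`. -/
theorem no_outflow_entrance_no_inflow_exit {V : Type*} [Fintype V] (s t : V) (hst : s ≠ t)
    (y : V → ℝ) (f g : V → V → ℝ)
    (hys : y s = 1) (hyt : y t = 1)
    (hf : ∀ a b : V, 0 ≤ f a b) (hg : ∀ a b : V, 0 ≤ g a b)
    (hfcons : ∀ v : V, v ≠ s → (∑ w, f v w) - (∑ w, f w v) = y v)
    (hfsink : (∑ w, f w s) = (∑ v, y v) - 1)
    (hgcons : ∀ v : V, v ≠ t → (∑ w, g w v) - (∑ w, g v w) = y v)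
    (hgsource : (∑ w, g t w) = (∑ v, y v) - 1)
    (hfg : ∀ a b : V, f a b = 0 ↔ g a b = 0) :
    ∀ w : V, f s w = 0 ∧ g s w = 0 ∧ f w t = 0 ∧ g w t = 0 :=
  no_outflow_entrance_no_inflow_exit_general s t y f g hys hyt hf hg hfcons hfsink hgcons hgsource
    hfg
end

section
/- Let V be a finite type, S ⊆ V, s ∈ S, and f : V → V → ℝ with 0 ≤ f a b for all a, b ∈ V. Assume: (i) f a b = 0 whenever a ∉ S or b ∉ S; (ii) for every v ∈ S with v ≠ s, ∑_{w ∈ V} f v w − ∑_{w ∈ V} f w v = 1. Then for every v ∈ S one has Relation.ReflTransGen (fun a b => 0 < f a b) v s; that is, there is a directed path v = v₀, v₁, …, v_k = s with f v_i v_{i+1} > 0 at each step, and in particular every vertex of this path lies in S. Hence every active driving cell is connected to the entrance through active driving cells. -/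
open Finset

section NetOutflow

variable {V M : Type*} [Fintype V] [AddCommGroup M]

def netOutflow (f : V → V → M) (a : V) : M :=
  ∑ b, f a b - ∑ b, f b a

theorem netOutflow_eq_zero_of_isolated {f : V → V → M} {a : V}
    (hout : ∀ b, f a b = 0) (hin : ∀ b, f b a = 0) : netOutflow f a = 0 := by
  simp [netOutflow, hout, hin]

/-- Flow along arcs inside `T` cancels, leaving only the flow across the cut `(T, Tᶜ)`. -/
theorem sum_netOutflow_eq_cut [DecidableEq V] (f : V → V → M) (T : Finset V) :
    ∑ a ∈ T, netOutflow f a = ∑ a ∈ T, ∑ b ∈ Tᶜ, f a b - ∑ a ∈ T, ∑ b ∈ Tᶜ, f b a := by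
  have hsplit : ∀ g : V → V → M, ∑ a ∈ T, ∑ b, g a b
      = ∑ a ∈ T, ∑ b ∈ T, g a b + ∑ a ∈ T, ∑ b ∈ Tᶜ, g a b := fun g => by
    rw [← sum_add_distrib]
    exact sum_congr rfl fun a _ => (sum_add_sum_compl T (g a)).symm
  have hinner : ∑ a ∈ T, ∑ b ∈ T, f a b = ∑ a ∈ T, ∑ b ∈ T, f b a := sum_comm
  simp only [netOutflow, sum_sub_distrib]
  rw [hsplit f, hsplit fun a b => f b a, hinner, add_sub_add_left_eq_sub]

theorem exists_pos_arc_out_of_sum_netOutflow_pos [PartialOrder M]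
    [IsOrderedAddMonoid M] {f : V → V → M} (hf : ∀ a b, 0 ≤ f a b) {T : Finset V}
    (hT : 0 < ∑ a ∈ T, netOutflow f a) : ∃ a ∈ T, ∃ b ∉ T, 0 < f a b := by
  classical
  by_contra! hcut
  have hout : ∑ a ∈ T, ∑ b ∈ Tᶜ, f a b ≤ 0 :=
    sum_nonpos fun a ha => sum_nonpos fun b hb =>
      ((hf a b).eq_of_not_lt (hcut a ha b (mem_compl.mp hb))).ge
  have hin : 0 ≤ ∑ a ∈ T, ∑ b ∈ Tᶜ, f b a :=
    sum_nonneg fun a _ => sum_nonneg fun b _ => hf b a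
  rw [sum_netOutflow_eq_cut] at hT
  exact hT.not_ge (sub_nonpos.mpr (hout.trans hin))

end NetOutflow

theorem active_cells_connected_to_entrance_general {V : Type*} [Fintype V] (S : Set V) (s : V)
    (f : V → V → ℝ) (hf : ∀ a b : V, 0 ≤ f a b)
    (hsupp : ∀ a b : V, a ∉ S ∨ b ∉ S → f a b = 0)
    (hcons : ∀ v ∈ S, v ≠ s → (∑ w, f v w) - (∑ w, f w v) = 1) :
    ∀ v ∈ S, Relation.ReflTransGen (fun a b => 0 < f a b) v s := by
  classical
  intro v hv
  by_contra hvs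
  -- The cells that cannot reach `s` have positive total net outflow, so some positive arc leaves them.
  set T := univ.filter fun a => ¬ Relation.ReflTransGen (fun a b => 0 < f a b) a s with hT
  have hunit : ∀ a ∈ T, a ∈ S → netOutflow f a = 1 := fun a ha haS =>
    hcons a haS fun has => (mem_filter.mp ha).2 (has ▸ .refl)
  have hnet : ∀ a ∈ T, 0 ≤ netOutflow f a := by
    intro a ha
    by_cases haS : a ∈ S
    · exact zero_le_one.trans (hunit a ha haS).ge
    · exact (netOutflow_eq_zero_of_isolated (fun b => hsupp a b (.inl haS))
        fun b => hsupp b a (.inr haS)).ge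
  have hvT : v ∈ T := mem_filter.mpr ⟨mem_univ v, hvs⟩
  have hpos : 0 < ∑ a ∈ T, netOutflow f a :=
    sum_pos' hnet ⟨v, hvT, zero_lt_one.trans_eq (hunit v hvT hv).symm⟩
  obtain ⟨a, ha, b, hb, hab⟩ := exists_pos_arc_out_of_sum_netOutflow_pos hf hpos
  simp only [hT, mem_filter, mem_univ, true_and, not_not] at ha hb
  exact ha (.head hab hb)

/-- In the flow-based MIP for two-way parking lot design, every active driving
cell is connected to the entrance `s` through active driving cells: there is a
directed path along arcs carrying positive flow. -/
theorem active_cells_connected_to_entrance {V : Type*} [Fintype V] (S : Set V) (s : V)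
    (hs : s ∈ S) (f : V → V → ℝ) (hf : ∀ a b : V, 0 ≤ f a b)
    (hsupp : ∀ a b : V, a ∉ S ∨ b ∉ S → f a b = 0)
    (hcons : ∀ v ∈ S, v ≠ s → (∑ w, f v w) - (∑ w, f w v) = 1) :
    ∀ v ∈ S, Relation.ReflTransGen (fun a b => 0 < f a b) v s :=
  active_cells_connected_to_entrance_general S s f hf hsupp hcons
end

section
/- Let V be a finite type, S ⊆ V, t ∈ S, and g : V → V → ℝ with 0 ≤ g a b for all a, b ∈ V. Assume: (i) g a b = 0 whenever a ∉ S or b ∉ S; (ii) for every v ∈ S with v ≠ t, ∑_{w ∈ V} g w v − ∑_{w ∈ V} g v w = 1. Then for every v ∈ S one has Relation.ReflTransGen (fun a b => 0 < g a b) t v; that is, there is a directed path t = v₀, v₁, …, v_k = v with g v_i v_{i+1} > 0 at each step, and in particular every vertex of this path lies in S. Hence every active driving cell is reachable from the exit through active driving cells. -/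
/-!
Let `U` be the set of active cells that cannot be reached from the exit. It does not contain the
exit, so every cell of `U` absorbs one unit and the net inflow into `U` is `|U|`. No flow enters
`U` from outside: a positive arc into `U` would start at an active (by the forcing constraints)
and hence reachable cell. Then the net inflow into `U` is at most zero, so `U` is empty.
-/

open Finset

section NetInflow

variable {V : Type*} [Fintype V] {g : V → V → ℝ}

/-- Arcs inside `U` cancel in the total net inflow, and what leaves `U` only lowers it. -/
theorem sum_netInflow_nonpos_of_no_inflow (hg : ∀ a b, 0 ≤ g a b) {U : Finset V}
    (hclosed : ∀ u ∈ U, ∀ w ∉ U, g w u = 0) :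
    ∑ u ∈ U, ((∑ w, g w u) - ∑ w, g u w) ≤ 0 := by
  have hin : ∑ u ∈ U, ∑ w, g w u = ∑ u ∈ U, ∑ w ∈ U, g w u :=
    sum_congr rfl fun u hu =>
      (sum_subset (subset_univ U) fun w _ hw => hclosed u hu w hw).symm
  have hout : ∑ u ∈ U, ∑ w ∈ U, g w u ≤ ∑ u ∈ U, ∑ w, g u w := by
    rw [sum_comm]
    exact sum_le_sum fun w _ =>
      sum_le_sum_of_subset_of_nonneg (subset_univ U) fun b _ _ => hg w b
  rw [sum_sub_distrib, hin]
  linarith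

theorem exists_pos_inflow_of_netInflow_pos (hg : ∀ a b, 0 ≤ g a b) {U : Finset V}
    (hU : U.Nonempty) (hnet : ∀ u ∈ U, 0 < (∑ w, g w u) - ∑ w, g u w) :
    ∃ u ∈ U, ∃ w ∉ U, 0 < g w u := by
  by_contra! hclosed
  have hpos : 0 < ∑ u ∈ U, ((∑ w, g w u) - ∑ w, g u w) := sum_pos hnet hU
  have hnonpos := sum_netInflow_nonpos_of_no_inflow hg fun u hu w hw =>
    le_antisymm (hclosed u hu w hw) (hg w u)
  linarith

end NetInflow

theorem active_cells_reachable_from_exit_general {V : Type*} [Fintype V] (S : Set V) (t : V)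
    (g : V → V → ℝ) (hg : ∀ a b : V, 0 ≤ g a b)
    (hsupp : ∀ a b : V, a ∉ S ∨ b ∉ S → g a b = 0)
    (hcons : ∀ v ∈ S, v ≠ t → (∑ w, g w v) - (∑ w, g v w) = 1) :
    ∀ v ∈ S, Relation.ReflTransGen (fun a b => 0 < g a b) t v := by
  classical
  intro v hv
  by_contra hnr
  set U : Finset V :=
    univ.filter fun u => u ∈ S ∧ ¬Relation.ReflTransGen (fun a b => 0 < g a b) t u
  have hnet : ∀ u ∈ U, 0 < (∑ w, g w u) - ∑ w, g u w := by
    intro u hu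
    obtain ⟨huS, hunr⟩ := (mem_filter.mp hu).2
    have hut : u ≠ t := by
      rintro rfl
      exact hunr .refl
    rw [hcons u huS hut]
    exact one_pos
  obtain ⟨u, hu, w, hw, hwu⟩ :=
    exists_pos_inflow_of_netInflow_pos hg ⟨v, mem_filter.mpr ⟨mem_univ v, hv, hnr⟩⟩ hnet
  have hwS : w ∈ S := by
    by_contra hwS
    exact hwu.ne' (hsupp w u (.inl hwS))
  have hwr : Relation.ReflTransGen (fun a b => 0 < g a b) t w := by
    by_contra hwr
    exact hw (mem_filter.mpr ⟨mem_univ w, hwS, hwr⟩)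
  exact (mem_filter.mp hu).2.2 (hwr.tail hwu)

/-- In the one-way parking lot MIP, every active driving cell is reachable from
the exit `t` through active driving cells: there is a directed path along arcs
carrying positive exit-commodity flow. -/
theorem active_cells_reachable_from_exit {V : Type*} [Fintype V] (S : Set V) (t : V)
    (ht : t ∈ S) (g : V → V → ℝ) (hg : ∀ a b : V, 0 ≤ g a b)
    (hsupp : ∀ a b : V, a ∉ S ∨ b ∉ S → g a b = 0)
    (hcons : ∀ v ∈ S, v ≠ t → (∑ w, g w v) - (∑ w, g v w) = 1) :
    ∀ v ∈ S, Relation.ReflTransGen (fun a b => 0 < g a b) t v :=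
  active_cells_reachable_from_exit_general S t g hg hsupp hcons
end

section
/- Let V be a finite type, s, t ∈ V, and v ∈ V with v ≠ s and v ≠ t. Let z : V → V → Prop satisfy ¬(z a b ∧ z b a) for all a, b ∈ V with a ≠ b, and let f, g : V → V → ℝ be nonnegative with f a a = 0 and g a a = 0 for every a, and such that 0 < f a b implies z a b and 0 < g a b implies z a b for all a, b. Suppose ∑_{w ∈ V} f v w − ∑_{w ∈ V} f w v = 1 and ∑_{w ∈ V} g w v − ∑_{w ∈ V} g v w = 1. Then there exist w₁, w₂ ∈ V with w₁ ≠ w₂, w₁ ≠ v, w₂ ≠ v, 0 < f v w₁, and 0 < g w₂ v. If moreover f a b = 0 and g a b = 0 whenever a ∉ S or b ∉ S for a set S ⊆ V, then w₁, w₂ ∈ S; hence v interacts with at least two distinct active neighbors and the one-way driving layout contains no dead ends or cul-de-sacs. -/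
theorem Finset.exists_pos_of_sum_sub_sum_pos {ι M : Type*} [AddCommGroup M] [LinearOrder M]
    [IsOrderedAddMonoid M] {s : Finset ι} {a b : ι → M} (hb : ∀ i ∈ s, 0 ≤ b i)
    (h : 0 < ∑ i ∈ s, a i - ∑ i ∈ s, b i) : ∃ i ∈ s, 0 < a i := by
  have hsum : ∑ i ∈ s, (0 : M) < ∑ i ∈ s, a i := by
    rw [Finset.sum_const_zero]
    exact (sub_pos.mp h).trans_le' (Finset.sum_nonneg hb)
  simpa using Finset.exists_lt_of_sum_lt hsum

theorem exists_ne_pos_of_net_outflow_pos {V : Type*} [Fintype V] (f : V → V → ℝ) (v : V)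
    (hf : ∀ w, 0 ≤ f w v) (hv : f v v = 0) (h : 0 < ∑ w, f v w - ∑ w, f w v) :
    ∃ w, w ≠ v ∧ 0 < f v w := by
  obtain ⟨w, -, hw⟩ := Finset.exists_pos_of_sum_sub_sum_pos (fun w _ => hf w) h
  exact ⟨w, by rintro rfl; exact hw.ne' hv, hw⟩

theorem no_dead_ends_general {V : Type*} [Fintype V] (v : V)
    (z : V → V → Prop) (hz : ∀ a b : V, a ≠ b → ¬(z a b ∧ z b a))
    (f g : V → V → ℝ) (hf : ∀ a b : V, 0 ≤ f a b) (hg : ∀ a b : V, 0 ≤ g a b)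
    (hfdiag : ∀ a : V, f a a = 0) (hgdiag : ∀ a : V, g a a = 0)
    (hfz : ∀ a b : V, 0 < f a b → z a b) (hgz : ∀ a b : V, 0 < g a b → z a b)
    (hfv : (∑ w, f v w) - (∑ w, f w v) = 1)
    (hgv : (∑ w, g w v) - (∑ w, g v w) = 1) :
    ∃ w₁ w₂ : V, w₁ ≠ w₂ ∧ w₁ ≠ v ∧ w₂ ≠ v ∧ 0 < f v w₁ ∧ 0 < g w₂ v ∧
      ∀ S : Set V, (∀ a b : V, a ∉ S ∨ b ∉ S → f a b = 0 ∧ g a b = 0) →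
        w₁ ∈ S ∧ w₂ ∈ S := by
  obtain ⟨w₁, hw₁v, hw₁⟩ :=
    exists_ne_pos_of_net_outflow_pos f v (hf · v) (hfdiag v) (hfv ▸ one_pos)
  -- `g` flows from the exit, so it is an outflow commodity for the reversed arcs.
  obtain ⟨w₂, hw₂v, hw₂⟩ :=
    exists_ne_pos_of_net_outflow_pos (fun a b => g b a) v (hg v) (hgdiag v) (hgv ▸ one_pos)
  refine ⟨w₁, w₂, ?_, hw₁v, hw₂v, hw₁, hw₂, fun S hS => ⟨?_, ?_⟩⟩
  · rintro rfl
    exact hz v w₁ hw₁v.symm ⟨hfz v w₁ hw₁, hgz w₁ v hw₂⟩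
  · by_contra h
    exact hw₁.ne' (hS v w₁ (Or.inr h)).1
  · by_contra h
    exact hw₂.ne' (hS w₂ v (Or.inl h)).2

/-- In the one-way parking lot MIP, a cell `v` other than the entrance `s` and
the exit `t` interacts with at least two distinct active neighbors: one
receiving positive entrance-commodity outflow and a different one sending
positive exit-commodity inflow. Hence the layout contains no dead ends. -/
theorem no_dead_ends {V : Type*} [Fintype V] (s t v : V) (hvs : v ≠ s) (hvt : v ≠ t)
    (z : V → V → Prop) (hz : ∀ a b : V, a ≠ b → ¬(z a b ∧ z b a))
    (f g : V → V → ℝ) (hf : ∀ a b : V, 0 ≤ f a b) (hg : ∀ a b : V, 0 ≤ g a b)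
    (hfdiag : ∀ a : V, f a a = 0) (hgdiag : ∀ a : V, g a a = 0)
    (hfz : ∀ a b : V, 0 < f a b → z a b) (hgz : ∀ a b : V, 0 < g a b → z a b)
    (hfv : (∑ w, f v w) - (∑ w, f w v) = 1)
    (hgv : (∑ w, g w v) - (∑ w, g v w) = 1) :
    ∃ w₁ w₂ : V, w₁ ≠ w₂ ∧ w₁ ≠ v ∧ w₂ ≠ v ∧ 0 < f v w₁ ∧ 0 < g w₂ v ∧
      ∀ S : Set V, (∀ a b : V, a ∉ S ∨ b ∉ S → f a b = 0 ∧ g a b = 0) →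
        w₁ ∈ S ∧ w₂ ∈ S :=
  no_dead_ends_general v z hz f g hf hg hfdiag hgdiag hfz hgz hfv hgv
end

section
/- Let G be a simple graph on a finite vertex type V, let S ⊆ V with s ∈ S, and let f : V → V → ℝ be nonnegative such that: (i) 0 < f a b implies G.Adj a b; (ii) f a b = 0 whenever a ∉ S or b ∉ S; (iii) ∑_{w ∈ V} f v w − ∑_{w ∈ V} f w v = 1 for every v ∈ S with v ≠ s. Then for every v ∈ S and every natural number d with d ≤ G.dist v s, there exists u ∈ S with G.dist v u = d. Consequently, the forward hop inequality y_v ≤ ∑_{u : dist(v,u) = d} y_u is satisfied by every feasible solution of the flow-based formulation, for every hop distance d up to the shortest hop distance from v to the entrance. -/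
/-!
Let `T` be the set of active cells at distance less than `d` from `v` (cells unreachable from `v`
included, their `SimpleGraph.dist` being `0`). It contains `v` but not `s`, so each of its cells
supplies one unit of flow and the net outflow of `T` is `#T > 0`. Some arc `a → b` with positive
flow therefore leaves `T`; then `b` is active and adjacent to `a`, whence
`d ≤ dist v b ≤ dist v a + 1 ≤ d`.
-/

open Finset

section NetOutflow

variable {V R : Type*} [Fintype V] [DecidableEq V] (f : V → V → R) (T : Finset V)

theorem sum_netOutflow_eq_cut_s9 [AddCommGroup R] :
    ∑ u ∈ T, (∑ w, f u w - ∑ w, f w u) =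
      ∑ u ∈ T, ∑ w ∈ Tᶜ, f u w - ∑ u ∈ T, ∑ w ∈ Tᶜ, f w u := by
  simp only [← sum_add_sum_compl T (f _), ← sum_add_sum_compl T (f · _), sum_sub_distrib,
    sum_add_distrib, sum_comm (s := T) (t := T) (f := fun u w => f w u)]
  abel

theorem exists_pos_arc_out_of_sum_netOutflow_pos_s9 [AddCommGroup R] [LinearOrder R]
    [IsOrderedAddMonoid R] (hf : ∀ a b, 0 ≤ f a b)
    (hnet : 0 < ∑ u ∈ T, (∑ w, f u w - ∑ w, f w u)) :
    ∃ a ∈ T, ∃ b ∉ T, 0 < f a b := by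
  by_contra! hcut
  have hout : ∑ u ∈ T, ∑ w ∈ Tᶜ, f u w ≤ 0 :=
    sum_nonpos fun a ha => sum_nonpos fun b hb => hcut a ha b (mem_compl.mp hb)
  have hin : 0 ≤ ∑ u ∈ T, ∑ w ∈ Tᶜ, f w u :=
    sum_nonneg fun _ _ => sum_nonneg fun _ _ => hf _ _
  rw [sum_netOutflow_eq_cut_s9] at hnet
  exact (sub_nonpos.mpr (hout.trans hin)).not_gt hnet

end NetOutflow

theorem forward_hop_inequality_valid_general {V : Type*} [Fintype V] (G : SimpleGraph V)
    (S : Set V) (s : V) (f : V → V → ℝ)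
    (hf : ∀ a b : V, 0 ≤ f a b)
    (hadj : ∀ a b : V, 0 < f a b → G.Adj a b)
    (hsupp : ∀ a b : V, a ∉ S ∨ b ∉ S → f a b = 0)
    (hcons : ∀ v ∈ S, v ≠ s → (∑ w, f v w) - (∑ w, f w v) = 1) :
    ∀ v ∈ S, ∀ d : ℕ, d ≤ G.dist v s → ∃ u ∈ S, G.dist v u = d := by
  classical
  intro v hv d hd
  obtain rfl | hdpos := Nat.eq_zero_or_pos d
  · exact ⟨v, hv, SimpleGraph.dist_self⟩
  set T : Finset V := {u | u ∈ S ∧ G.dist v u < d}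
  have hsupply : ∀ u ∈ T, ∑ w, f u w - ∑ w, f w u = 1 := by
    intro u hu
    rw [mem_filter] at hu
    exact hcons u hu.2.1 (by rintro rfl; omega)
  have hvT : v ∈ T := by simpa [T] using ⟨hv, hdpos⟩
  have hnet : 0 < ∑ u ∈ T, (∑ w, f u w - ∑ w, f w u) := by
    rw [sum_congr rfl hsupply, sum_const, nsmul_one, Nat.cast_pos]
    exact card_pos.mpr ⟨v, hvT⟩
  obtain ⟨a, haT, b, hbT, hab⟩ := exists_pos_arc_out_of_sum_netOutflow_pos_s9 f T hf hnet
  have hbS : b ∈ S := by_contra fun hbS => hab.ne' (hsupp a b (Or.inr hbS))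
  simp only [T, mem_filter, mem_univ, true_and, not_and, not_lt] at haT hbT
  refine ⟨b, hbS, ?_⟩
  have := (hadj a b hab).diff_dist_adj (u := v)
  have := hbT hbS
  omega

/-- Validity of the forward hop inequalities: in any feasible solution of the
two-way flow formulation, for every active cell `v` and every hop distance `d`
up to the shortest hop distance from `v` to the entrance `s`, some active cell
lies at hop distance exactly `d` from `v`. -/
theorem forward_hop_inequality_valid {V : Type*} [Fintype V] (G : SimpleGraph V)
    (S : Set V) (s : V) (hs : s ∈ S) (f : V → V → ℝ)
    (hf : ∀ a b : V, 0 ≤ f a b)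
    (hadj : ∀ a b : V, 0 < f a b → G.Adj a b)
    (hsupp : ∀ a b : V, a ∉ S ∨ b ∉ S → f a b = 0)
    (hcons : ∀ v ∈ S, v ≠ s → (∑ w, f v w) - (∑ w, f w v) = 1) :
    ∀ v ∈ S, ∀ d : ℕ, d ≤ G.dist v s → ∃ u ∈ S, G.dist v u = d :=
  forward_hop_inequality_valid_general G S s f hf hadj hsupp hcons
end

section
/- Let G be a simple graph on a finite vertex type V, let S ⊆ V with s ∈ S, and let f : V → V → ℝ be nonnegative such that: (i) 0 < f a b implies G.Adj a b; (ii) f a b = 0 whenever a ∉ S or b ∉ S; (iii) ∑_{w ∈ V} f v w − ∑_{w ∈ V} f w v = 1 for every v ∈ S with v ≠ s. Then for every v ∈ S and every natural number d with d ≤ G.dist s v, there exists u ∈ S with G.dist s u = d. Consequently, the reverse hop inequality y_v ≤ ∑_{u : dist(s,u) = d} y_u is satisfied by every feasible solution of the flow-based formulation, for every hop distance d up to the shortest hop distance from the entrance to v. -/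
/-!
Summing the conservation equations over the active cells that the support of the flow does not
connect to the entrance gives their number on one side and, since no flow crosses the boundary
of that set, zero on the other. So the flow support joins the entrance to every active cell
through active cells. Along such a walk the hop distance from the entrance changes by at most
one per step, so it takes every value between `0` and `G.dist s v`.
-/

open Finset

namespace SimpleGraph

variable {V : Type*} {G : SimpleGraph V}

theorem Walk.exists_mem_support_dist_eq (s : V) {u v : V} (p : G.Walk u v) {d : ℕ}
    (hu : G.dist s u ≤ d) (hv : d ≤ G.dist s v) : ∃ x ∈ p.support, G.dist s x = d := by
  induction p with
  | nil => exact ⟨_, start_mem_support _, le_antisymm hu hv⟩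
  | @cons u w v h p ih =>
    by_cases hd : G.dist s u = d
    · exact ⟨u, start_mem_support _, hd⟩
    · have := h.diff_dist_adj (u := s)
      obtain ⟨x, hx, hxd⟩ := ih (by omega) hv
      exact ⟨x, List.mem_cons_of_mem _ hx, hxd⟩

theorem Walk.mem_of_mem_support {S : Set V} (hS : ∀ a b, G.Adj a b → a ∈ S) {u v : V}
    (p : G.Walk u v) (hv : v ∈ S) : ∀ x ∈ p.support, x ∈ S := by
  induction p with
  | nil => simpa using hv
  | cons h p ih =>
    simp only [support_cons, List.mem_cons, forall_eq_or_imp]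
    exact ⟨hS _ _ h, ih hv⟩

end SimpleGraph

section Flow

variable {V : Type*}

theorem sum_netFlow_eq_zero_of_closed [Fintype V] {β : Type*} [AddCommGroup β] (f : V → V → β)
    (C : Finset V) (hout : ∀ u ∈ C, ∀ w ∉ C, f u w = 0) (hin : ∀ u ∈ C, ∀ w ∉ C, f w u = 0) :
    ∑ u ∈ C, (∑ w, f u w - ∑ w, f w u) = 0 := by
  have hrestrict : ∀ u ∈ C, ∑ w, f u w - ∑ w, f w u = ∑ w ∈ C, f u w - ∑ w ∈ C, f w u := by
    intro u hu
    rw [sum_subset (subset_univ C) fun w _ hw => hout u hu w hw,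
      sum_subset (subset_univ C) fun w _ hw => hin u hu w hw]
  rw [sum_congr rfl hrestrict, sum_sub_distrib, sum_comm, sub_self]

def flowGraph (f : V → V → ℝ) : SimpleGraph V :=
  SimpleGraph.fromRel fun a b => 0 < f a b

variable {f : V → V → ℝ} {S : Set V}

theorem flowGraph_le {G : SimpleGraph V} (hadj : ∀ a b, 0 < f a b → G.Adj a b) :
    flowGraph f ≤ G := by
  rintro a b ⟨-, hab | hba⟩
  exacts [hadj a b hab, (hadj b a hba).symm]

theorem flowGraph_adj_mem (hsupp : ∀ a b, a ∉ S ∨ b ∉ S → f a b = 0) {a b : V}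
    (h : (flowGraph f).Adj a b) : a ∈ S := by
  by_contra ha
  rcases h with ⟨-, hab | hba⟩
  · exact hab.ne' (hsupp a b (Or.inl ha))
  · exact hba.ne' (hsupp b a (Or.inr ha))

theorem flowGraph_reachable_of_netFlow_eq_one [Fintype V] (s : V) (hf : ∀ a b, 0 ≤ f a b)
    (hsupp : ∀ a b, a ∉ S ∨ b ∉ S → f a b = 0)
    (hcons : ∀ v ∈ S, v ≠ s → (∑ w, f v w) - (∑ w, f w v) = 1) :
    ∀ v ∈ S, (flowGraph f).Reachable s v := by
  classical
  intro v hv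
  by_contra hvs
  set C : Finset V := {u | u ∈ S ∧ ¬ (flowGraph f).Reachable s u}
  have hvC : v ∈ C := by simp [C, hv, hvs]
  have hflow_within : ∀ a b, 0 < f a b → (a ∈ C ↔ b ∈ C) := by
    intro a b hab
    by_cases heq : a = b
    · rw [heq]
    have hadj : (flowGraph f).Adj a b := ⟨heq, Or.inl hab⟩
    simp only [C, mem_filter, mem_univ, true_and, flowGraph_adj_mem hsupp hadj,
      flowGraph_adj_mem hsupp hadj.symm]
    exact not_congr ⟨fun h => h.trans hadj.reachable, fun h => h.trans hadj.symm.reachable⟩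
  have hnet_zero := sum_netFlow_eq_zero_of_closed f C
    (fun u hu w hw => le_antisymm (not_lt.1 fun h => hw ((hflow_within u w h).1 hu)) (hf u w))
    (fun u hu w hw => le_antisymm (not_lt.1 fun h => hw ((hflow_within w u h).2 hu)) (hf w u))
  have hnet_one : ∀ u ∈ C, (∑ w, f u w) - (∑ w, f w u) = 1 := by
    intro u hu
    simp only [C, mem_filter, mem_univ, true_and] at hu
    exact hcons u hu.1 (by rintro rfl; exact hu.2 .rfl)
  rw [sum_congr rfl hnet_one, sum_const, nsmul_one, Nat.cast_eq_zero, card_eq_zero] at hnet_zero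
  exact notMem_empty v (hnet_zero ▸ hvC)

end Flow

theorem reverse_hop_inequality_valid_general {V : Type*} [Fintype V] (G : SimpleGraph V)
    (S : Set V) (s : V) (f : V → V → ℝ)
    (hf : ∀ a b : V, 0 ≤ f a b)
    (hadj : ∀ a b : V, 0 < f a b → G.Adj a b)
    (hsupp : ∀ a b : V, a ∉ S ∨ b ∉ S → f a b = 0)
    (hcons : ∀ v ∈ S, v ≠ s → (∑ w, f v w) - (∑ w, f w v) = 1) :
    ∀ v ∈ S, ∀ d : ℕ, d ≤ G.dist s v → ∃ u ∈ S, G.dist s u = d := by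
  intro v hv d hd
  obtain ⟨p⟩ := flowGraph_reachable_of_netFlow_eq_one s hf hsupp hcons v hv
  obtain ⟨x, hx, hxd⟩ :=
    (p.mapLe (flowGraph_le hadj)).exists_mem_support_dist_eq s (by simp) hd
  rw [SimpleGraph.Walk.support_mapLe_eq_support] at hx
  exact ⟨x, p.mem_of_mem_support (fun _ _ => flowGraph_adj_mem hsupp) hv x hx, hxd⟩

/-- Validity of the reverse hop inequalities: in any feasible solution of the
two-way flow formulation, for every active cell `v` and every hop distance `d`
up to the shortest hop distance from the entrance `s` to `v`, some active cell
lies at hop distance exactly `d` from the entrance. -/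
theorem reverse_hop_inequality_valid {V : Type*} [Fintype V] (G : SimpleGraph V)
    (S : Set V) (s : V) (hs : s ∈ S) (f : V → V → ℝ)
    (hf : ∀ a b : V, 0 ≤ f a b)
    (hadj : ∀ a b : V, 0 < f a b → G.Adj a b)
    (hsupp : ∀ a b : V, a ∉ S ∨ b ∉ S → f a b = 0)
    (hcons : ∀ v ∈ S, v ≠ s → (∑ w, f v w) - (∑ w, f w v) = 1) :
    ∀ v ∈ S, ∀ d : ℕ, d ≤ G.dist s v → ∃ u ∈ S, G.dist s u = d :=
  reverse_hop_inequality_valid_general G S s f hf hadj hsupp hcons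
end

section
/- Let V be a finite type, R : V → V → Prop an arc relation, and S ⊆ V a set of active driving anchors with s ∈ S such that every v ∈ S is joined to s by an R-path all of whose vertices lie in S. Let C, R₀ ⊆ V with s ∉ C and s ∉ R₀, and suppose every R-path from any vertex of R₀ to s contains a vertex of C. Let P be a finite type of parking fields with a set X ⊆ P of active parking fields and neighbor sets N : P → Finset V satisfying the accessibility condition: p ∈ X implies N p ∩ S ≠ ∅. Let m ∈ R₀ and let P₀ be a finite set of parking fields with (N p : Set V) ⊆ R₀ ∪ C for every p ∈ P₀, and assume the single-purpose bound (if m ∈ S then 1 else 0) + |{p ∈ P₀ : p ∈ X}| ≤ 1. Then (if m ∈ S then 1 else 0) + |{p ∈ P₀ : p ∈ X}| ≤ |{c ∈ C : c ∈ S}|; that is, the strengthened connectivity cut constraint y_m + ∑_{p ∈ P₀} x_p ≤ ∑_{c ∈ C} y_c is valid. -/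
/-!
By the single-purpose bound the left-hand side is `0` or `1`, so it suffices to find an active
anchor in `C` whenever it is `1`. Then `m` is active, or some active parking field of `P₀` has an
active driving neighbor, which lies in `R₀ ∪ C`. An active anchor in `R₀` is joined to the entrance
by an active path; if no anchor of `C` were active, that path would avoid `C`, contradicting the
cut property.
-/

open Classical Relation

theorem Relation.ReflTransGen.avoid_of_disjoint {α : Type*} {r : α → α → Prop} {S C : Set α}
    {a b : α} (hdisj : Disjoint C S) (h : ReflTransGen (fun x y => r x y ∧ x ∈ S ∧ y ∈ S) a b) :
    ReflTransGen (fun x y => r x y ∧ x ∉ C ∧ y ∉ C) a b :=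
  ReflTransGen.mono
    (fun _ _ ⟨hr, hx, hy⟩ => ⟨hr, hdisj.notMem_of_mem_right hx, hdisj.notMem_of_mem_right hy⟩) a b h

theorem cut_inter_nonempty_of_mem_union {V : Type*} {R : V → V → Prop} {S C R₀ : Set V} {s : V}
    (hconn : ∀ v ∈ S, ReflTransGen (fun a b => R a b ∧ a ∈ S ∧ b ∈ S) v s)
    (hcut : ∀ u ∈ R₀, ¬ ReflTransGen (fun a b => R a b ∧ a ∉ C ∧ b ∉ C) u s)
    {u : V} (hu : u ∈ R₀ ∪ C) (huS : u ∈ S) : (C ∩ S).Nonempty := by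
  rcases hu with huR | huC
  · by_contra hCS
    have hdisj : Disjoint C S :=
      Set.disjoint_iff_inter_eq_empty.2 (Set.not_nonempty_iff_eq_empty.1 hCS)
    exact hcut u huR ((hconn u huS).avoid_of_disjoint hdisj)
  · exact ⟨u, huC, huS⟩

theorem strengthened_connectivity_cut_valid_general {V : Type*} [Fintype V]
    (R : V → V → Prop) (S : Set V) (s : V)
    (hconn : ∀ v ∈ S, Relation.ReflTransGen (fun a b => R a b ∧ a ∈ S ∧ b ∈ S) v s)
    (C R₀ : Set V)
    (hcut : ∀ u ∈ R₀, ¬ Relation.ReflTransGen (fun a b => R a b ∧ a ∉ C ∧ b ∉ C) u s)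
    {P : Type*} (X : Set P) (N : P → Finset V)
    (hacc : ∀ p ∈ X, ((N p : Set V) ∩ S).Nonempty)
    (m : V) (hm : m ∈ R₀) (P₀ : Finset P)
    (hP₀ : ∀ p ∈ P₀, (N p : Set V) ⊆ R₀ ∪ C)
    (hsingle : (if m ∈ S then (1 : ℕ) else 0) + ({p | p ∈ P₀ ∧ p ∈ X} : Set P).ncard ≤ 1) :
    (if m ∈ S then (1 : ℕ) else 0) + ({p | p ∈ P₀ ∧ p ∈ X} : Set P).ncard ≤
      ({c | c ∈ C ∧ c ∈ S} : Set V).ncard := by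
  obtain hzero | hpos := Nat.eq_zero_or_pos
    ((if m ∈ S then (1 : ℕ) else 0) + ({p | p ∈ P₀ ∧ p ∈ X} : Set P).ncard)
  · omega
  have hCS : (C ∩ S).Nonempty := by
    by_cases hmS : m ∈ S
    · exact cut_inter_nonempty_of_mem_union hconn hcut (Or.inl hm) hmS
    · obtain ⟨p, hpP, hpX⟩ : ({p | p ∈ P₀ ∧ p ∈ X} : Set P).Nonempty :=
        Set.nonempty_of_ncard_ne_zero (by simpa [hmS] using hpos.ne')
      obtain ⟨v, hvN, hvS⟩ := hacc p hpX
      exact cut_inter_nonempty_of_mem_union hconn hcut (hP₀ p hpP hvN) hvS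
  have : 0 < ({c | c ∈ C ∧ c ∈ S} : Set V).ncard := (Set.ncard_pos (Set.toFinite _)).2 hCS
  omega

/-- Validity of the strengthened connectivity cut constraint
`y_m + ∑_{p ∈ P₀} x_p ≤ ∑_{c ∈ C} y_c` in the branch-and-cut reformulation of
the two-way parking lot MIP: for a vertex cut set `C` separating the region
`R₀` from the entrance `s`, a cell `m ∈ R₀`, and a collection `P₀` of parking
fields whose driving neighbors all lie in `R₀ ∪ C`. -/
theorem strengthened_connectivity_cut_valid {V : Type*} [Fintype V]
    (R : V → V → Prop) (S : Set V) (s : V) (hs : s ∈ S)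
    (hconn : ∀ v ∈ S, Relation.ReflTransGen (fun a b => R a b ∧ a ∈ S ∧ b ∈ S) v s)
    (C R₀ : Set V) (hsC : s ∉ C) (hsR : s ∉ R₀)
    (hcut : ∀ u ∈ R₀, ¬ Relation.ReflTransGen (fun a b => R a b ∧ a ∉ C ∧ b ∉ C) u s)
    {P : Type*} [Fintype P] (X : Set P) (N : P → Finset V)
    (hacc : ∀ p ∈ X, ((N p : Set V) ∩ S).Nonempty)
    (m : V) (hm : m ∈ R₀) (P₀ : Finset P)
    (hP₀ : ∀ p ∈ P₀, (N p : Set V) ⊆ R₀ ∪ C)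
    (hsingle : (if m ∈ S then (1 : ℕ) else 0) + ({p | p ∈ P₀ ∧ p ∈ X} : Set P).ncard ≤ 1) :
    (if m ∈ S then (1 : ℕ) else 0) + ({p | p ∈ P₀ ∧ p ∈ X} : Set P).ncard ≤
      ({c | c ∈ C ∧ c ∈ S} : Set V).ncard :=
  strengthened_connectivity_cut_valid_general R S s hconn C R₀ hcut X N hacc m hm P₀ hP₀ hsingle
end

section
/- Let V be a finite type, S ⊆ V, s, t ∈ S, z : V → V → Prop, and f, g : V → V → ℝ nonnegative with f a b = 0 and g a b = 0 whenever a ∉ S or b ∉ S, such that 0 < f a b implies z a b and 0 < g a b implies z a b. Assume ∑_{w ∈ V} f v w − ∑_{w ∈ V} f w v = 1 for every v ∈ S with v ≠ s, and ∑_{w ∈ V} g w v − ∑_{w ∈ V} g v w = 1 for every v ∈ S with v ≠ t. Then for every v ∈ S, Relation.ReflTransGen (fun a b => z a b ∧ a ∈ S ∧ b ∈ S) v s and Relation.ReflTransGen (fun a b => z a b ∧ a ∈ S ∧ b ∈ S) t v; that is, in the orientation determined by z, every active driving cell can reach the entrance and is reachable from the exit along directed arcs through active cells. -/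
/-!
Let `A` be the set of vertices that cannot reach `s` along arcs carrying flow. No flow leaves `A`,
so the total net outflow of `A` is at most `0`; as `s ∉ A` and no vertex other than `s` is a net
sink, every vertex of `A` has net outflow `0`. Hence a vertex with positive net outflow — every
active cell other than `s` — reaches `s`. Reversing all arcs turns `g` into such a flow towards `t`.
-/

open Finset

namespace FlowReach

variable {V : Type*} [Fintype V]

def netOutflow (f : V → V → ℝ) (v : V) : ℝ := ∑ w, f v w - ∑ w, f w v

lemma sum_netOutflow_nonpos {f : V → V → ℝ} (hf : ∀ a b, 0 ≤ f a b) {A : Finset V}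
    (hA : ∀ u ∈ A, ∀ w ∉ A, f u w = 0) : ∑ u ∈ A, netOutflow f u ≤ 0 := by
  have hout : ∀ u ∈ A, ∑ w, f u w = ∑ w ∈ A, f u w := fun u hu =>
    (sum_subset (subset_univ A) fun w _ hw => hA u hu w hw).symm
  have hin : ∀ u, ∑ w ∈ A, f w u ≤ ∑ w, f w u := fun u =>
    sum_le_sum_of_subset_of_nonneg (subset_univ A) fun w _ _ => hf w u
  calc ∑ u ∈ A, netOutflow f u
      ≤ ∑ u ∈ A, (∑ w ∈ A, f u w - ∑ w ∈ A, f w u) :=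
        sum_le_sum fun u hu => by
          rw [netOutflow, hout u hu]
          exact sub_le_sub_left (hin u) _
    _ = 0 := by rw [sum_sub_distrib, sum_comm, sub_self]

lemma reflTransGen_of_netOutflow_pos {r : V → V → Prop} {f : V → V → ℝ} {s v : V}
    (hf : ∀ a b, 0 ≤ f a b) (hfr : ∀ a b, 0 < f a b → r a b)
    (hsink : ∀ u, u ≠ s → 0 ≤ netOutflow f u) (hv : 0 < netOutflow f v) :
    Relation.ReflTransGen r v s := by
  classical
  by_contra hvs
  set A : Finset V := {u | ¬ Relation.ReflTransGen r u s}
  have hclosed : ∀ u ∈ A, ∀ w ∉ A, f u w = 0 := by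
    intro u hu w hw
    simp only [A, mem_filter, mem_univ, true_and, not_not] at hu hw
    by_contra hne
    exact hu (.head (hfr u w ((hf u w).lt_of_ne' hne)) hw)
  have hnonneg : ∀ u ∈ A, 0 ≤ netOutflow f u := fun u hu =>
    hsink u fun hus => by simp [A, hus, Relation.ReflTransGen.refl] at hu
  have hvA : v ∈ A := by simpa [A] using hvs
  have := single_le_sum hnonneg hvA
  linarith [sum_netOutflow_nonpos hf hclosed]

lemma netOutflow_nonneg_of_ne {S : Set V} {f : V → V → ℝ} {s : V}
    (hsupp : ∀ a b, a ∉ S ∨ b ∉ S → f a b = 0)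
    (hcons : ∀ v ∈ S, v ≠ s → netOutflow f v = 1) (v : V) (hvs : v ≠ s) :
    0 ≤ netOutflow f v := by
  by_cases hv : v ∈ S
  · rw [hcons v hv hvs]
    exact zero_le_one
  · simp [netOutflow, hsupp v _ (.inl hv), hsupp _ v (.inr hv)]

lemma reflTransGen_active {S : Set V} {s : V} {z : V → V → Prop} {f : V → V → ℝ}
    (hf : ∀ a b, 0 ≤ f a b) (hsupp : ∀ a b, a ∉ S ∨ b ∉ S → f a b = 0)
    (hfz : ∀ a b, 0 < f a b → z a b) (hcons : ∀ v ∈ S, v ≠ s → netOutflow f v = 1)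
    {v : V} (hv : v ∈ S) :
    Relation.ReflTransGen (fun a b => z a b ∧ a ∈ S ∧ b ∈ S) v s := by
  obtain rfl | hvs := eq_or_ne v s
  · exact .refl
  have hfS : ∀ a b, 0 < f a b → z a b ∧ a ∈ S ∧ b ∈ S := fun a b hab =>
    ⟨hfz a b hab, by_contra fun ha => hab.ne' (hsupp a b (.inl ha)),
      by_contra fun hb => hab.ne' (hsupp a b (.inr hb))⟩
  refine reflTransGen_of_netOutflow_pos hf hfS (netOutflow_nonneg_of_ne hsupp hcons) ?_
  rw [hcons v hv hvs]
  exact zero_lt_one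

end FlowReach

theorem one_way_connectivity_general {V : Type*} [Fintype V] (S : Set V) (s t : V)
    (z : V → V → Prop) (f g : V → V → ℝ)
    (hf : ∀ a b : V, 0 ≤ f a b) (hg : ∀ a b : V, 0 ≤ g a b)
    (hfsupp : ∀ a b : V, a ∉ S ∨ b ∉ S → f a b = 0)
    (hgsupp : ∀ a b : V, a ∉ S ∨ b ∉ S → g a b = 0)
    (hfz : ∀ a b : V, 0 < f a b → z a b) (hgz : ∀ a b : V, 0 < g a b → z a b)
    (hfcons : ∀ v ∈ S, v ≠ s → (∑ w, f v w) - (∑ w, f w v) = 1)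
    (hgcons : ∀ v ∈ S, v ≠ t → (∑ w, g w v) - (∑ w, g v w) = 1) :
    ∀ v ∈ S,
      Relation.ReflTransGen (fun a b => z a b ∧ a ∈ S ∧ b ∈ S) v s ∧
      Relation.ReflTransGen (fun a b => z a b ∧ a ∈ S ∧ b ∈ S) t v := by
  intro v hv
  refine ⟨FlowReach.reflTransGen_active hf hfsupp hfz hfcons hv, ?_⟩
  have hback : Relation.ReflTransGen (fun a b => z b a ∧ a ∈ S ∧ b ∈ S) v t :=
    FlowReach.reflTransGen_active (f := fun a b => g b a) (fun a b => hg b a)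
      (fun a b hab => hgsupp b a hab.symm) (fun a b => hgz b a) hgcons hv
  exact Relation.reflTransGen_swap.mp
    (Relation.ReflTransGen.mono (fun a b hab => ⟨hab.1, hab.2.2, hab.2.1⟩) v t hback)

/-- In the one-way parking lot MIP, in the orientation determined by the
direction variables `z`, every active driving cell can reach the entrance `s`
and is reachable from the exit `t` along directed arcs through active cells. -/
theorem one_way_connectivity {V : Type*} [Fintype V] (S : Set V) (s t : V)
    (hs : s ∈ S) (ht : t ∈ S) (z : V → V → Prop) (f g : V → V → ℝ)
    (hf : ∀ a b : V, 0 ≤ f a b) (hg : ∀ a b : V, 0 ≤ g a b)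
    (hfsupp : ∀ a b : V, a ∉ S ∨ b ∉ S → f a b = 0)
    (hgsupp : ∀ a b : V, a ∉ S ∨ b ∉ S → g a b = 0)
    (hfz : ∀ a b : V, 0 < f a b → z a b) (hgz : ∀ a b : V, 0 < g a b → z a b)
    (hfcons : ∀ v ∈ S, v ≠ s → (∑ w, f v w) - (∑ w, f w v) = 1)
    (hgcons : ∀ v ∈ S, v ≠ t → (∑ w, g w v) - (∑ w, g v w) = 1) :
    ∀ v ∈ S,
      Relation.ReflTransGen (fun a b => z a b ∧ a ∈ S ∧ b ∈ S) v s ∧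
      Relation.ReflTransGen (fun a b => z a b ∧ a ∈ S ∧ b ∈ S) t v :=
  one_way_connectivity_general S s t z f g hf hg hfsupp hgsupp hfz hgz hfcons hgcons
end
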